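/- Permutation form of the classification of finite-index subgroups of the Hecke group (Theorem on bipartite q-boid graphs): for every integer q ≥ 3 and every positive integer n, there is a bijection between (i) the set of conjugacy classes of index-n subgroups of the free product (ℤ/2ℤ) ∗ (ℤ/qℤ) (isomorphic to the Hecke group H_q), and (ii) the set of orbits, under simultaneous conjugation by Sym(Fin n), of pairs (σ, τ) of permutations of Fin n such that σ² = 1, τ^q = 1, and the subgroup of Sym(Fin n) generated by σ and τ acts transitively on Fin n. -/

import Mathlib

/-- Two subgroups (of index `n`) are related iff they are conjugate. -/
def conjRel (Γ : Type*) [Group Γ] (n : ℕ) :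
    {H : Subgroup Γ // H.index = n} → {H : Subgroup Γ // H.index = n} → Prop :=
  fun H₁ H₂ => ∃ g : Γ, H₂.1 = Subgroup.map (MulAut.conj g).toMonoidHom H₁.1

/-- Pairs `(σ, τ)` of permutations of `Fin n` with `σ² = 1`, `τ^q = 1`, and such that the
subgroup generated by `σ` and `τ` acts transitively on `Fin n`.  These encode labelled
bipartite `q`-boid graphs with `n` edges. -/
def BoidPair (q n : ℕ) : Type :=
  {p : Equiv.Perm (Fin n) × Equiv.Perm (Fin n) //
    p.1 ^ 2 = 1 ∧ p.2 ^ q = 1 ∧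
    ∀ x y : Fin n, ∃ g ∈ Subgroup.closure {p.1, p.2}, g x = y}

/-- Two pairs are related iff they are simultaneously conjugate in `Sym(Fin n)`. -/
def boidRel (q n : ℕ) : BoidPair q n → BoidPair q n → Prop :=
  fun p₁ p₂ => ∃ g : Equiv.Perm (Fin n),
    p₂.1.1 = g * p₁.1.1 * g⁻¹ ∧ p₂.1.2 = g * p₁.1.2 * g⁻¹

/-! A subgroup `H` of index `n` of a group `Γ` gives a transitive action of `Γ` on its `n` cosets,
and a transitive action on `Fin n` gives back the stabilizer of a point. Stabilizers of different
points are conjugate, and a transitive action is isomorphic to the action on the cosets of a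
point stabilizer, so conjugacy classes of index-`n` subgroups match transitive homomorphisms
`Γ →* Sym(Fin n)` up to conjugation. For `Γ = ℤ/2 ∗ ℤ/q` such a homomorphism is exactly a pair
`(σ, τ)` with `σ² = τ^q = 1`, and its image is `⟨σ, τ⟩`. -/

open Equiv Multiplicative

section PermutationRepresentations

variable {Γ α : Type*} [Group Γ]

def IsTransitiveHom (φ : Γ →* Perm α) : Prop :=
  ∀ x y : α, ∃ γ, φ γ x = y

lemma isTransitiveHom_iff_exists_mem_range (φ : Γ →* Perm α) :
    IsTransitiveHom φ ↔ ∀ x y : α, ∃ g ∈ φ.range, g x = y := by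
  simp [IsTransitiveHom]

def pointStabilizer (φ : Γ →* Perm α) (x : α) : Subgroup Γ :=
  (MulAction.stabilizer (Perm α) x).comap φ

@[simp] lemma mem_pointStabilizer {φ : Γ →* Perm α} {x : α} {γ : Γ} :
    γ ∈ pointStabilizer φ x ↔ φ γ x = x :=
  Iff.rfl

lemma pointStabilizer_apply_eq_map_conj (φ : Γ →* Perm α) (γ : Γ) (x : α) :
    pointStabilizer φ (φ γ x) = (pointStabilizer φ x).map (MulAut.conj γ).toMonoidHom := by
  ext δ
  rw [Subgroup.mem_map_equiv, MulAut.conj_symm_apply]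
  simp [Perm.mul_apply, Equiv.symm_apply_eq]

lemma pointStabilizer_conj_comp (g : Perm α) (φ : Γ →* Perm α) (x : α) :
    pointStabilizer ((MulAut.conj g).toMonoidHom.comp φ) x = pointStabilizer φ (g⁻¹ x) := by
  ext γ
  simp [Perm.mul_apply, ← Perm.eq_inv_iff_eq]

lemma IsTransitiveHom.exists_pointStabilizer_eq_map_conj {φ : Γ →* Perm α}
    (hφ : IsTransitiveHom φ) (x y : α) :
    ∃ γ, pointStabilizer φ y = (pointStabilizer φ x).map (MulAut.conj γ).toMonoidHom := by
  obtain ⟨γ, rfl⟩ := hφ x y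
  exact ⟨γ, pointStabilizer_apply_eq_map_conj φ γ x⟩

noncomputable def IsTransitiveHom.quotientEquiv {φ : Γ →* Perm α} (hφ : IsTransitiveHom φ)
    {S : Subgroup Γ} {x : α} (hS : pointStabilizer φ x = S) : Γ ⧸ S ≃ α :=
  (Quotient.congrRight fun γ δ => by
      rw [QuotientGroup.leftRel_apply, ← hS, mem_pointStabilizer, map_mul, map_inv,
        Perm.mul_apply, Perm.inv_eq_iff_eq, Setoid.ker_def, eq_comm]).trans
    (Setoid.quotientKerEquivOfSurjective (fun γ => φ γ x) (hφ x))

lemma IsTransitiveHom.quotientEquiv_mk {φ : Γ →* Perm α} (hφ : IsTransitiveHom φ)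
    {S : Subgroup Γ} {x : α} (hS : pointStabilizer φ x = S) (γ : Γ) :
    hφ.quotientEquiv hS (γ : Γ ⧸ S) = φ γ x :=
  rfl

lemma IsTransitiveHom.quotientEquiv_smul {φ : Γ →* Perm α} (hφ : IsTransitiveHom φ)
    {S : Subgroup Γ} {x : α} (hS : pointStabilizer φ x = S) (γ : Γ) (z : Γ ⧸ S) :
    hφ.quotientEquiv hS (γ • z) = φ γ (hφ.quotientEquiv hS z) := by
  induction z using QuotientGroup.induction_on with
  | H δ => simp [quotientEquiv_mk, Perm.mul_apply]

lemma exists_conj_comp_eq_of_pointStabilizer_eq {φ ψ : Γ →* Perm α}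
    (hφ : IsTransitiveHom φ) (hψ : IsTransitiveHom ψ) {x y : α}
    (h : pointStabilizer φ x = pointStabilizer ψ y) :
    ∃ g : Perm α, ψ = (MulAut.conj g).toMonoidHom.comp φ := by
  refine ⟨(hφ.quotientEquiv rfl).symm.trans (hψ.quotientEquiv h.symm),
    MonoidHom.ext fun γ => Equiv.ext fun z => ?_⟩
  obtain ⟨w, rfl⟩ := (hψ.quotientEquiv h.symm).surjective z
  simp only [MonoidHom.comp_apply, MulEquiv.coe_toMonoidHom, MulAut.conj_apply, Perm.mul_apply,
    Perm.inv_def, symm_trans_apply, symm_symm, symm_apply_apply, trans_apply]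
  rw [← hφ.quotientEquiv_smul, symm_apply_apply, hψ.quotientEquiv_smul]

end PermutationRepresentations

section CosetRepresentation

variable {Γ α : Type*} [Group Γ]

def cosetPermHom (H : Subgroup Γ) (e : Γ ⧸ H ≃ α) : Γ →* Perm α :=
  e.permCongrHom.toMonoidHom.comp (MulAction.toPermHom Γ (Γ ⧸ H))

lemma cosetPermHom_apply (H : Subgroup Γ) (e : Γ ⧸ H ≃ α) (γ : Γ) (x : α) :
    cosetPermHom H e γ x = e (γ • e.symm x) :=
  rfl

lemma isTransitiveHom_cosetPermHom (H : Subgroup Γ) (e : Γ ⧸ H ≃ α) :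
    IsTransitiveHom (cosetPermHom H e) := by
  intro x y
  obtain ⟨γ, hγ⟩ := MulAction.exists_smul_eq Γ (e.symm x) (e.symm y)
  exact ⟨γ, by rw [cosetPermHom_apply, hγ, apply_symm_apply]⟩

lemma pointStabilizer_cosetPermHom (H : Subgroup Γ) (e : Γ ⧸ H ≃ α) (z : Γ ⧸ H) :
    pointStabilizer (cosetPermHom H e) (e z) = MulAction.stabilizer Γ z := by
  ext γ
  simp [cosetPermHom_apply]

end CosetRepresentation

section Classification

variable (Γ : Type*) [Group Γ] (n : ℕ)

def TransitiveRep : Type _ :=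
  {φ : Γ →* Perm (Fin n) // IsTransitiveHom φ}

def repConjRel : TransitiveRep Γ n → TransitiveRep Γ n → Prop :=
  fun φ ψ => ∃ g : Perm (Fin n), ψ.1 = (MulAut.conj g).toMonoidHom.comp φ.1

variable {Γ n}

noncomputable def cosetLabelling (hn : 0 < n) (H : {H : Subgroup Γ // H.index = n}) :
    Γ ⧸ H.1 ≃ Fin n :=
  (Nat.equivFinOfCardPos (by rw [← Subgroup.index_eq_card, H.2]; exact hn.ne')).trans
    (finCongr H.2)

noncomputable def cosetRep (hn : 0 < n) (H : {H : Subgroup Γ // H.index = n}) :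
    TransitiveRep Γ n :=
  ⟨cosetPermHom H.1 (cosetLabelling hn H), isTransitiveHom_cosetPermHom _ _⟩

lemma pointStabilizer_cosetRep (hn : 0 < n) (H : {H : Subgroup Γ // H.index = n}) :
    pointStabilizer (cosetRep hn H).1 (cosetLabelling hn H (1 : Γ)) = H.1 := by
  rw [cosetRep, pointStabilizer_cosetPermHom, MulAction.stabilizer_quotient]

def TransitiveRep.stabilizer (hn : 0 < n) (φ : TransitiveRep Γ n) :
    {H : Subgroup Γ // H.index = n} :=
  ⟨pointStabilizer φ.1 ⟨0, hn⟩, by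
    rw [Subgroup.index_eq_card, Nat.card_congr (φ.2.quotientEquiv rfl), Nat.card_fin]⟩

lemma repConjRel_cosetRep (hn : 0 < n) {H₁ H₂ : {H : Subgroup Γ // H.index = n}}
    (h : conjRel Γ n H₁ H₂) : repConjRel Γ n (cosetRep hn H₁) (cosetRep hn H₂) := by
  obtain ⟨g, hg⟩ := h
  refine exists_conj_comp_eq_of_pointStabilizer_eq (cosetRep hn H₁).2 (cosetRep hn H₂).2
    (x := (cosetRep hn H₁).1 g (cosetLabelling hn H₁ (1 : Γ)))
    (y := cosetLabelling hn H₂ (1 : Γ)) ?_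
  rw [pointStabilizer_apply_eq_map_conj, pointStabilizer_cosetRep, pointStabilizer_cosetRep, hg]

lemma repConjRel_cosetRep_stabilizer (hn : 0 < n) (φ : TransitiveRep Γ n) :
    repConjRel Γ n (cosetRep hn (φ.stabilizer hn)) φ :=
  exists_conj_comp_eq_of_pointStabilizer_eq (cosetRep hn _).2 φ.2 (pointStabilizer_cosetRep hn _)

lemma conjRel_stabilizer (hn : 0 < n) {φ ψ : TransitiveRep Γ n} (h : repConjRel Γ n φ ψ) :
    conjRel Γ n (φ.stabilizer hn) (ψ.stabilizer hn) := by
  obtain ⟨g, hg⟩ := h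
  obtain ⟨γ, hγ⟩ := φ.2.exists_pointStabilizer_eq_map_conj ⟨0, hn⟩ (g⁻¹ ⟨0, hn⟩)
  refine ⟨γ, ?_⟩
  simp only [TransitiveRep.stabilizer, hg, pointStabilizer_conj_comp, hγ]

lemma conjRel_stabilizer_cosetRep (hn : 0 < n) (H : {H : Subgroup Γ // H.index = n}) :
    conjRel Γ n ((cosetRep hn H).stabilizer hn) H := by
  obtain ⟨γ, hγ⟩ := (cosetRep hn H).2.exists_pointStabilizer_eq_map_conj ⟨0, hn⟩
    (cosetLabelling hn H (1 : Γ))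
  exact ⟨γ, (pointStabilizer_cosetRep hn H).symm.trans hγ⟩

noncomputable def quotConjRelEquiv (hn : 0 < n) :
    Quot (conjRel Γ n) ≃ Quot (repConjRel Γ n) where
  toFun := Quot.lift (fun H => Quot.mk _ (cosetRep hn H))
    fun _ _ h => Quot.sound (repConjRel_cosetRep hn h)
  invFun := Quot.lift (fun φ => Quot.mk _ (φ.stabilizer hn))
    fun _ _ h => Quot.sound (conjRel_stabilizer hn h)
  left_inv := Quot.ind fun H => Quot.sound (conjRel_stabilizer_cosetRep hn H)
  right_inv := Quot.ind fun φ => Quot.sound (repConjRel_cosetRep_stabilizer hn φ)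

end Classification

section CyclicFreeProduct

open Monoid
open scoped Monoid.Coprod

variable {G : Type*} [Group G] {m p q : ℕ}

lemma zpowers_ofAdd_one : Subgroup.zpowers (ofAdd (1 : ZMod m)) = ⊤ := by
  refine eq_top_iff.2 fun x _ => ?_
  obtain ⟨k, hk⟩ := ZMod.intCast_surjective x.toAdd
  exact Subgroup.mem_zpowers_iff.2 ⟨k, by rw [← ofAdd_zsmul, zsmul_one, hk, ofAdd_toAdd]⟩

lemma ofAdd_one_pow_self : ofAdd (1 : ZMod m) ^ m = 1 := by
  rw [← ofAdd_nsmul, nsmul_one, ZMod.natCast_self, ofAdd_zero]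

lemma range_eq_zpowers_ofAdd_one (f : Multiplicative (ZMod m) →* G) :
    f.range = Subgroup.zpowers (f (ofAdd 1)) := by
  rw [MonoidHom.range_eq_map, ← zpowers_ofAdd_one, MonoidHom.map_zpowers]

lemma monoidHom_ext_zmod {f g : Multiplicative (ZMod m) →* G} (h : f (ofAdd 1) = g (ofAdd 1)) :
    f = g := by
  refine MonoidHom.ext fun x => ?_
  have hx : x ∈ Subgroup.zpowers (ofAdd (1 : ZMod m)) := zpowers_ofAdd_one ▸ Subgroup.mem_top x
  obtain ⟨k, rfl⟩ := hx
  rw [map_zpow, map_zpow, h]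

def monoidHomOfPowEqOne (g : G) (hg : g ^ m = 1) : Multiplicative (ZMod m) →* G :=
  AddMonoidHom.toMultiplicativeLeft
    (ZMod.lift m ⟨zmultiplesHom (Additive G) (Additive.ofMul g), by
      simp only [zmultiplesHom_apply, ← ofMul_zpow, zpow_natCast, hg, ofMul_one]⟩)

@[simp] lemma monoidHomOfPowEqOne_ofAdd_one (g : G) (hg : g ^ m = 1) :
    monoidHomOfPowEqOne g hg (ofAdd 1) = g := by
  rw [← Int.cast_one (R := ZMod m)]
  simp only [monoidHomOfPowEqOne, AddMonoidHom.coe_toMultiplicativeLeft, Function.comp_apply,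
    toAdd_ofAdd, ZMod.lift_coe, zmultiplesHom_apply, one_zsmul, toMul_ofMul]

def liftOfPowEqOne (a b : G) (ha : a ^ p = 1) (hb : b ^ q = 1) :
    Multiplicative (ZMod p) ∗ Multiplicative (ZMod q) →* G :=
  Coprod.lift (monoidHomOfPowEqOne a ha) (monoidHomOfPowEqOne b hb)

@[simp] lemma liftOfPowEqOne_inl (a b : G) (ha : a ^ p = 1) (hb : b ^ q = 1) :
    liftOfPowEqOne a b ha hb (Coprod.inl (ofAdd 1)) = a := by
  simp [liftOfPowEqOne]

@[simp] lemma liftOfPowEqOne_inr (a b : G) (ha : a ^ p = 1) (hb : b ^ q = 1) :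
    liftOfPowEqOne a b ha hb (Coprod.inr (ofAdd 1)) = b := by
  simp [liftOfPowEqOne]

lemma coprod_hom_ext_zmod {f g : Multiplicative (ZMod p) ∗ Multiplicative (ZMod q) →* G}
    (hl : f (Coprod.inl (ofAdd 1)) = g (Coprod.inl (ofAdd 1)))
    (hr : f (Coprod.inr (ofAdd 1)) = g (Coprod.inr (ofAdd 1))) : f = g :=
  Coprod.hom_ext (monoidHom_ext_zmod hl) (monoidHom_ext_zmod hr)

lemma map_inl_ofAdd_one_pow (f : Multiplicative (ZMod p) ∗ Multiplicative (ZMod q) →* G) :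
    f (Coprod.inl (ofAdd 1)) ^ p = 1 := by
  rw [← map_pow, ← map_pow, ofAdd_one_pow_self, map_one, map_one]

lemma map_inr_ofAdd_one_pow (f : Multiplicative (ZMod p) ∗ Multiplicative (ZMod q) →* G) :
    f (Coprod.inr (ofAdd 1)) ^ q = 1 := by
  rw [← map_pow, ← map_pow, ofAdd_one_pow_self, map_one, map_one]

lemma range_eq_closure_pair (f : Multiplicative (ZMod p) ∗ Multiplicative (ZMod q) →* G) :
    f.range = Subgroup.closure {f (Coprod.inl (ofAdd 1)), f (Coprod.inr (ofAdd 1))} := by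
  rw [Coprod.range_eq, range_eq_zpowers_ofAdd_one, range_eq_zpowers_ofAdd_one,
    Subgroup.zpowers_eq_closure, Subgroup.zpowers_eq_closure, ← Subgroup.closure_union,
    Set.singleton_union]
  rfl

noncomputable def transitiveRepEquivBoidPair (q n : ℕ) :
    TransitiveRep (Multiplicative (ZMod 2) ∗ Multiplicative (ZMod q)) n ≃ BoidPair q n where
  toFun φ := ⟨(φ.1 (Coprod.inl (ofAdd 1)), φ.1 (Coprod.inr (ofAdd 1))),
    map_inl_ofAdd_one_pow φ.1, map_inr_ofAdd_one_pow φ.1, by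
      rw [← range_eq_closure_pair, ← isTransitiveHom_iff_exists_mem_range]
      exact φ.2⟩
  invFun σ := ⟨liftOfPowEqOne σ.1.1 σ.1.2 σ.2.1 σ.2.2.1, by
    rw [isTransitiveHom_iff_exists_mem_range, range_eq_closure_pair, liftOfPowEqOne_inl,
      liftOfPowEqOne_inr]
    exact σ.2.2.2⟩
  left_inv φ := Subtype.ext (coprod_hom_ext_zmod (by simp) (by simp))
  right_inv σ := Subtype.ext (Prod.ext (by simp) (by simp))

@[simp] lemma transitiveRepEquivBoidPair_apply_coe
    (φ : TransitiveRep (Multiplicative (ZMod 2) ∗ Multiplicative (ZMod q)) n) :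
    (transitiveRepEquivBoidPair q n φ).1 =
      (φ.1 (Coprod.inl (ofAdd 1)), φ.1 (Coprod.inr (ofAdd 1))) :=
  rfl

lemma repConjRel_iff_boidRel
    (φ ψ : TransitiveRep (Multiplicative (ZMod 2) ∗ Multiplicative (ZMod q)) n) :
    repConjRel _ n φ ψ ↔
      boidRel q n (transitiveRepEquivBoidPair q n φ) (transitiveRepEquivBoidPair q n ψ) := by
  simp only [repConjRel, boidRel, transitiveRepEquivBoidPair_apply_coe]
  exact exists_congr fun g => ⟨fun h => by simp [h],
    fun h => coprod_hom_ext_zmod (by simpa using h.1) (by simpa using h.2)⟩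

end CyclicFreeProduct

theorem hecke_subgroups_equiv_boid_pairs_general (q n : ℕ) (hn : 0 < n) :
    Nonempty
      (Quot (conjRel (Monoid.Coprod (Multiplicative (ZMod 2)) (Multiplicative (ZMod q))) n) ≃
       Quot (boidRel q n)) :=
  ⟨(quotConjRelEquiv hn).trans
    (Quot.congr (transitiveRepEquivBoidPair q n) repConjRel_iff_boidRel)⟩

/-- Permutation form of the classification of finite-index subgroups of the Hecke group
`H_q ≅ (ℤ/2ℤ) ∗ (ℤ/qℤ)`: for `q ≥ 3` and `n ≥ 1`, conjugacy classes of index-`n` subgroups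
of `(ℤ/2ℤ) ∗ (ℤ/qℤ)` are in bijection with orbits, under simultaneous conjugation by
`Sym(Fin n)`, of pairs `(σ, τ)` of permutations of `Fin n` with `σ² = 1`, `τ^q = 1` and
`⟨σ, τ⟩` transitive on `Fin n`. -/
theorem hecke_subgroups_equiv_boid_pairs (q n : ℕ) (hq : 3 ≤ q) (hn : 0 < n) :
    Nonempty
      (Quot (conjRel (Monoid.Coprod (Multiplicative (ZMod 2)) (Multiplicative (ZMod q))) n) ≃
       Quot (boidRel q n)) :=
  hecke_subgroups_equiv_boid_pairs_general q n hn
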